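/- (Proposition, part (a)) Let p be a prime. For every point P ∈ 𝒫 ∖ S, the set C_P = {v ∈ Sym2 X : P ∈ L_v} is a clique of the graph G, i.e., any two distinct vertices v, v' ∈ C_P are adjacent in G. -/

import Mathlib

/-- Points of the concretely-defined finite projective plane of order `p`:
one point `alpha`, the points `beta y`, and the points `gamma x y`. -/
inductive ProjPoint (p : ℕ) : Type where
  | alpha : ProjPoint p
  | beta (y : ZMod p) : ProjPoint p
  | gamma (x y : ZMod p) : ProjPoint p

namespace ProjPoint

/-- The line `L_α = {P_α} ∪ {P_β(y) : y}`. -/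
def Lalpha (p : ℕ) : Set (ProjPoint p) :=
  {P | P = alpha ∨ ∃ y : ZMod p, P = beta y}

/-- The line `L_β(i) = {P_α} ∪ {P_γ(i,y) : y}`. -/
def Lbeta (p : ℕ) (i : ZMod p) : Set (ProjPoint p) :=
  {P | P = alpha ∨ ∃ y : ZMod p, P = gamma i y}

/-- The line `L_γ(i,j) = {P_β(i)} ∪ {P_γ(k, i·k + j) : k}`. -/
def Lgamma (p : ℕ) (i j : ZMod p) : Set (ProjPoint p) :=
  {P | P = beta i ∨ ∃ k : ZMod p, P = gamma k (i * k + j)}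

/-- The set of lines `ℒ`. -/
def Lines (p : ℕ) : Set (Set (ProjPoint p)) :=
  {Lalpha p} ∪ {L | ∃ i : ZMod p, L = Lbeta p i} ∪
    {L | ∃ i j : ZMod p, L = Lgamma p i j}

/-- The set `S = {P_α} ∪ {P_γ(k, k²) : k}`. -/
def S (p : ℕ) : Set (ProjPoint p) :=
  {P | P = alpha ∨ ∃ k : ZMod p, P = gamma k (k ^ 2)}

end ProjPoint

namespace ProjPoint

/-- Indexing of `S` by `X = Option (ZMod p)`: `Spt none = P_α` and
`Spt (some k) = P_γ(k, k²)`. -/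
def Spt (p : ℕ) : Option (ZMod p) → ProjPoint p
  | none => alpha
  | some k => gamma k (k ^ 2)

/-- The graph `G` on unordered pairs (diagonal allowed) from `X = Option (ZMod p)`,
where two distinct vertices are adjacent iff no element of `X` belongs to both. -/
def G (p : ℕ) : SimpleGraph (Sym2 (Option (ZMod p))) where
  Adj v w := v ≠ w ∧ ∀ x : Option (ZMod p), ¬(x ∈ v ∧ x ∈ w)
  symm := ⟨fun v w h => ⟨h.1.symm, fun x hx => h.2 x ⟨hx.2, hx.1⟩⟩⟩
  loopless := ⟨fun v h => h.1 rfl⟩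

end ProjPoint

/-!
The line `L_v` meets `S` exactly in the points indexed by `v`: for a diagonal `v` this is the
definition, and otherwise it is the arc property of the conic `S` (no three of its points are
collinear). If two vertices `v ≠ w` of `C_P` shared an index `x`, the lines `L_v` and `L_w` would
both pass through `S(x)` and through `P ≠ S(x)`, hence coincide, and then `v = w`.
-/

theorem eq_and_eq_of_mul_add_eq_mul_add {R : Type*} [CommRing R] [NoZeroDivisors R]
    {a b a' b' x y : R} (hxy : x ≠ y) (hx : a * x + b = a' * x + b')
    (hy : a * y + b = a' * y + b') : a = a' ∧ b = b' := by
  have hprod : (a - a') * (x - y) = 0 := by linear_combination hx - hy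
  have ha : a = a' := sub_eq_zero.mp ((mul_eq_zero.mp hprod).resolve_right (sub_ne_zero.mpr hxy))
  subst ha
  exact ⟨rfl, add_left_cancel hx⟩

theorem add_eq_of_sq_eq_mul_add {R : Type*} [CommRing R] [NoZeroDivisors R]
    {u w x y : R} (hxy : x ≠ y) (hx : x ^ 2 = u * x + w) (hy : y ^ 2 = u * y + w) :
    x + y = u := by
  have hprod : (x - y) * (x + y - u) = 0 := by linear_combination hx - hy
  exact sub_eq_zero.mp ((mul_eq_zero.mp hprod).resolve_left (sub_ne_zero.mpr hxy))

namespace ProjPoint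

variable {p : ℕ}

theorem Spt_mem_S (l : Option (ZMod p)) : Spt p l ∈ S p := by
  cases l with
  | none => exact Or.inl rfl
  | some k => exact Or.inr ⟨k, rfl⟩

theorem Spt_injective : Function.Injective (Spt p) := by
  rintro (_ | _) (_ | _) h <;> simp_all [Spt]

theorem line_eq_of_mem_of_mem [Fact p.Prime] {L L' : Set (ProjPoint p)}
    (hL : L ∈ Lines p) (hL' : L' ∈ Lines p) {P Q : ProjPoint p} (hPQ : P ≠ Q)
    (hP : P ∈ L) (hQ : Q ∈ L) (hP' : P ∈ L') (hQ' : Q ∈ L') : L = L' := by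
  rcases hL with (rfl | ⟨i, rfl⟩) | ⟨a, b, rfl⟩ <;>
    rcases hL' with (rfl | ⟨i', rfl⟩) | ⟨a', b', rfl⟩ <;>
    cases P <;> cases Q <;> simp_all [Lalpha, Lbeta, Lgamma]
  -- left: two affine points on two lines `y = a x + b`, `y = a' x + b'`
  obtain ⟨rfl, rfl⟩ := eq_and_eq_of_mul_add_eq_mul_add hPQ hP' hQ'
  rfl

theorem not_three_Spt_mem_line [Fact p.Prime] {L : Set (ProjPoint p)} (hL : L ∈ Lines p)
    {a b c : Option (ZMod p)} (hab : a ≠ b) (hac : a ≠ c) (hbc : b ≠ c)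
    (ha : Spt p a ∈ L) (hb : Spt p b ∈ L) (hc : Spt p c ∈ L) : False := by
  rcases hL with (rfl | ⟨i, rfl⟩) | ⟨u, w, rfl⟩ <;>
    cases a <;> cases b <;> cases c <;> simp_all [Spt, Lalpha, Lbeta, Lgamma]
  -- left: three distinct roots of `k ^ 2 = u * k + w`
  exact hbc (add_left_cancel ((add_eq_of_sq_eq_mul_add hab ha hb).trans
    (add_eq_of_sq_eq_mul_add hac ha hc).symm))

theorem Spt_mem_iff_mem [Fact p.Prime] {Lv : Sym2 (Option (ZMod p)) → Set (ProjPoint p)}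
    (hLine : ∀ v, Lv v ∈ Lines p)
    (hoff : ∀ l l' : Option (ZMod p), l ≠ l' → Spt p l ∈ Lv s(l, l') ∧ Spt p l' ∈ Lv s(l, l'))
    (hdiag : ∀ l : Option (ZMod p), Spt p l ∈ Lv s(l, l) ∧
      ∀ t ∈ S p, t ∈ Lv s(l, l) → t = Spt p l)
    (l : Option (ZMod p)) (v : Sym2 (Option (ZMod p))) : Spt p l ∈ Lv v ↔ l ∈ v := by
  induction v using Sym2.ind with
  | h a b =>
    rw [Sym2.mem_iff]
    by_cases hab : a = b
    · subst hab
      refine ⟨fun hl => Or.inl (Spt_injective ((hdiag a).2 _ (Spt_mem_S l) hl)), ?_⟩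
      rintro (rfl | rfl) <;> exact (hdiag l).1
    · obtain ⟨ha, hb⟩ := hoff a b hab
      refine ⟨fun hl => ?_, ?_⟩
      · by_contra! hne
        exact not_three_Spt_mem_line (hLine _) hne.1 hne.2 hab hl ha hb
      · rintro (rfl | rfl) <;> assumption

end ProjPoint

open ProjPoint in
/-- (Proposition, part (a)) For every point `P` of the plane not in `S`, the set
`C_P = {v : P ∈ L_v}` is a clique of the graph `G`. -/
theorem clique_of_point_not_in_S (p : ℕ) [Fact p.Prime]
    (Lv : Sym2 (Option (ZMod p)) → Set (ProjPoint p))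
    (hLine : ∀ v, Lv v ∈ ProjPoint.Lines p)
    (hoff : ∀ l l' : Option (ZMod p), l ≠ l' →
      ProjPoint.Spt p l ∈ Lv s(l, l') ∧ ProjPoint.Spt p l' ∈ Lv s(l, l'))
    (hdiag : ∀ l : Option (ZMod p), ProjPoint.Spt p l ∈ Lv s(l, l) ∧
      ∀ t ∈ ProjPoint.S p, t ∈ Lv s(l, l) → t = ProjPoint.Spt p l) :
    ∀ P : ProjPoint p, P ∉ ProjPoint.S p →
      (ProjPoint.G p).IsClique {v : Sym2 (Option (ZMod p)) | P ∈ Lv v} := by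
  have hSpt := Spt_mem_iff_mem hLine hoff hdiag
  intro P hP v hPv w hPw hvw
  refine ⟨hvw, fun x ⟨hxv, hxw⟩ => hvw ?_⟩
  have hPx : P ≠ Spt p x := fun h => hP (h ▸ Spt_mem_S x)
  have hLvw : Lv v = Lv w :=
    line_eq_of_mem_of_mem (hLine v) (hLine w) hPx hPv ((hSpt x v).2 hxv) hPw ((hSpt x w).2 hxw)
  exact Sym2.ext fun l => by rw [← hSpt l v, ← hSpt l w, hLvw]
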